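/- Let L, M, B̄, P, S, γ̄ > 0, 0 < δ < 1, and F₁ > F*. Set α = 2(F₁ − F*)/(S·γ̄), β = L·γ̄·M/(P·B̄), η = L²·γ̄²·M/(6·B̄), and define B(K) = (α + βK + η(2K−1)(K−1))·(K/(K−1+δ)) for integers K ≥ 1. If (1−δ)(F₁ − F*)/(S·γ̄·δ) > (3δ−1)·L·γ̄·M/(2δ·P·B̄) + L²·γ̄²·M/(2·B̄), then B(2) < B(1), and hence every minimizer K* of B over the positive integers satisfies K* ≥ 2. -/

import Mathlib

/-!
Only `B(1) = (α + β)/δ` and `B(2) = 2(α + 2β + 3η)/(1 + δ)` matter. Clearing denominators,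
`B(2) < B(1)` is the linear condition `(3δ − 1)β + 6δη < (1 − δ)α`, and that is the hypothesis on
the problem constants multiplied by `2δ`. A minimizer cannot then be `1`, since `B(2)` is smaller.
-/

noncomputable def kavgBound (α β η δ K : ℝ) : ℝ :=
  (α + β * K + η * (2 * K - 1) * (K - 1)) * (K / (K - 1 + δ))

section

variable (α β η : ℝ) {δ : ℝ}

lemma kavgBound_one : kavgBound α β η δ 1 = (α + β) / δ := by
  simp [kavgBound, div_eq_mul_inv]

lemma kavgBound_two (hδ : 1 + δ ≠ 0) :
    kavgBound α β η δ 2 = 2 * (α + 2 * β + 3 * η) / (1 + δ) := by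
  rw [kavgBound, show (2 : ℝ) - 1 + δ = 1 + δ by ring]
  field_simp
  ring

lemma kavgBound_two_lt_one_iff (hδ : 0 < δ) :
    kavgBound α β η δ 2 < kavgBound α β η δ 1 ↔ (3 * δ - 1) * β + 6 * δ * η < (1 - δ) * α := by
  rw [kavgBound_one, kavgBound_two α β η (by positivity), div_lt_div_iff₀ (by positivity) hδ]
  constructor <;> intro h <;> linarith

end

lemma delay_condition_scaled (L M Bbar P S γ δ F₁ Fstar : ℝ) (hδ : 0 < δ)
    (hcond : (1 - δ) * (F₁ - Fstar) / (S * γ * δ)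
        > (3 * δ - 1) * L * γ * M / (2 * δ * P * Bbar) + L ^ 2 * γ ^ 2 * M / (2 * Bbar)) :
    (3 * δ - 1) * (L * γ * M / (P * Bbar)) + 6 * δ * (L ^ 2 * γ ^ 2 * M / (6 * Bbar))
      < (1 - δ) * (2 * (F₁ - Fstar) / (S * γ)) := by
  have hδδ := mul_inv_cancel₀ hδ.ne'
  have hrhs : 2 * δ * ((3 * δ - 1) * L * γ * M / (2 * δ * P * Bbar)
        + L ^ 2 * γ ^ 2 * M / (2 * Bbar))
      = (3 * δ - 1) * (L * γ * M / (P * Bbar)) + 6 * δ * (L ^ 2 * γ ^ 2 * M / (6 * Bbar)) := by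
    simp only [div_eq_mul_inv, mul_inv]
    linear_combination ((3 * δ - 1) * L * γ * M * P⁻¹ * Bbar⁻¹) * hδδ
  have hlhs : 2 * δ * ((1 - δ) * (F₁ - Fstar) / (S * γ * δ))
      = (1 - δ) * (2 * (F₁ - Fstar) / (S * γ)) := by
    simp only [div_eq_mul_inv, mul_inv]
    linear_combination (2 * (1 - δ) * (F₁ - Fstar) * S⁻¹ * γ⁻¹) * hδδ
  rw [← hrhs, ← hlhs]
  exact mul_lt_mul_of_pos_left hcond (by positivity)

theorem optimal_delay_greater_than_one_general
    (L M Bbar P S γ δ F₁ Fstar : ℝ)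
    (hδ0 : 0 < δ)
    (α β η : ℝ)
    (hα : α = 2 * (F₁ - Fstar) / (S * γ))
    (hβ : β = L * γ * M / (P * Bbar))
    (hη : η = L ^ 2 * γ ^ 2 * M / (6 * Bbar))
    (Bf : ℕ → ℝ)
    (hBf : ∀ K : ℕ, Bf K = (α + β * (K : ℝ) + η * (2 * (K : ℝ) - 1) * ((K : ℝ) - 1))
        * ((K : ℝ) / ((K : ℝ) - 1 + δ)))
    (hcond : (1 - δ) * (F₁ - Fstar) / (S * γ * δ)
        > (3 * δ - 1) * L * γ * M / (2 * δ * P * Bbar) + L ^ 2 * γ ^ 2 * M / (2 * Bbar)) :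
    Bf 2 < Bf 1 ∧
      ∀ Kstar : ℕ, (1 ≤ Kstar ∧ ∀ K : ℕ, 1 ≤ K → Bf Kstar ≤ Bf K) → 2 ≤ Kstar := by
  have hB : ∀ K : ℕ, Bf K = kavgBound α β η δ K := hBf
  have h21 : Bf 2 < Bf 1 := by
    simp only [hB, Nat.cast_ofNat, Nat.cast_one]
    rw [kavgBound_two_lt_one_iff α β η hδ0, hα, hβ, hη]
    exact delay_condition_scaled L M Bbar P S γ δ F₁ Fstar hδ0 hcond
  refine ⟨h21, fun Kstar ⟨h1, hmin⟩ => ?_⟩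
  by_contra h
  obtain rfl : Kstar = 1 := by omega
  exact (hmin 2 one_le_two).not_gt h21

/-- **The optimal averaging delay is greater than 1 (Theorem 4).**
With the total number of samples `S = N·K` held constant and
`α = 2(F₁ − F*)/(Sγ̄)`, `β = Lγ̄M/(PB̄)`, `η = L²γ̄²M/(6B̄)`, if
`(1−δ)(F₁ − F*)/(Sγ̄δ) > (3δ−1)Lγ̄M/(2δPB̄) + L²γ̄²M/(2B̄)` then `B(2) < B(1)`,
and hence every minimizer of `B` over the positive integers is at least 2. -/
theorem optimal_delay_greater_than_one
    (L M Bbar P S γ δ F₁ Fstar : ℝ)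
    (hL : 0 < L) (hM : 0 < M) (hBbar : 0 < Bbar) (hP : 0 < P) (hS : 0 < S)
    (hγ : 0 < γ) (hδ0 : 0 < δ) (hδ1 : δ < 1) (hF : Fstar < F₁)
    (α β η : ℝ)
    (hα : α = 2 * (F₁ - Fstar) / (S * γ))
    (hβ : β = L * γ * M / (P * Bbar))
    (hη : η = L ^ 2 * γ ^ 2 * M / (6 * Bbar))
    (Bf : ℕ → ℝ)
    (hBf : ∀ K : ℕ, Bf K = (α + β * (K : ℝ) + η * (2 * (K : ℝ) - 1) * ((K : ℝ) - 1))
        * ((K : ℝ) / ((K : ℝ) - 1 + δ)))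
    (hcond : (1 - δ) * (F₁ - Fstar) / (S * γ * δ)
        > (3 * δ - 1) * L * γ * M / (2 * δ * P * Bbar) + L ^ 2 * γ ^ 2 * M / (2 * Bbar)) :
    Bf 2 < Bf 1 ∧
      ∀ Kstar : ℕ, (1 ≤ Kstar ∧ ∀ K : ℕ, 1 ≤ K → Bf Kstar ≤ Bf K) → 2 ≤ Kstar :=
  optimal_delay_greater_than_one_general L M Bbar P S γ δ F₁ Fstar hδ0 α β η hα hβ hη Bf hBf hcond
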